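/- arXiv:1812.05660 — 4 statements merged into one kernel-verified Lean document; each statement's English description precedes it below -/
import Mathlib

section
/- For every q ∈ [1,∞) there is a constant C_q ≥ 1 such that, for all Borel probability measures μ, ν supported on [0,1) and all m ∈ ℕ: C_q^{−1} ‖μ^(m) ∗ ν^(m)‖_q^q ≤ ‖(μ∗ν)^(m)‖_q^q ≤ C_q ‖μ^(m) ∗ ν^(m)‖_q^q. -/
open MeasureTheory Filter Set Metric

/-- Convolution of measures: push-forward of μ × ν under (x,y) ↦ x + y. -/
noncomputable def mconv (μ ν : Measure ℝ) : Measure ℝ :=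
  (μ.prod ν).map (fun p : ℝ × ℝ => p.1 + p.2)

/-- The level-m discretization μ^(m): the atomic measure with
μ^(m)({k2^{-m}}) = μ([k2^{-m},(k+1)2^{-m})), realized as the push-forward of μ under
x ↦ ⌊2^m x⌋ 2^{-m}. -/
noncomputable def discretize (μ : Measure ℝ) (m : ℕ) : Measure ℝ :=
  μ.map (fun x : ℝ => (⌊x * 2 ^ m⌋ : ℝ) / 2 ^ m)

/-- ‖ρ‖_q^q = Σ_{x ∈ supp ρ} ρ({x})^q for a (finitely/countably supported) measure ρ. -/
noncomputable def lqNormQ (μ : Measure ℝ) (q : ℝ) : ℝ :=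
  ∑' x : ℝ, (μ {x}).toReal ^ q

/-!
Both `(μ ∗ ν)^(m)` and `μ^(m) ∗ ν^(m)` are push-forwards of `μ × ν`, under
`(x, y) ↦ ⌊x + y⌋ₘ` and `(x, y) ↦ ⌊x⌋ₘ + ⌊y⌋ₘ` (with `⌊x⌋ₘ = ⌊2^m x⌋ 2^{-m}`), and these two maps
differ at every point by `0` or `2^{-m}`. Hence every atom of either measure is bounded by the
sum of two neighbouring atoms of the other, and `(a + b)^q ≤ 2^{q-1} (a^q + b^q)` gives both
inequalities with `C_q = 2^q`.
-/

open scoped ENNReal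

noncomputable def dyadicFloor (m : ℕ) (x : ℝ) : ℝ := (⌊x * 2 ^ m⌋ : ℝ) / 2 ^ m

lemma measurable_dyadicFloor (m : ℕ) : Measurable (dyadicFloor m) := by
  unfold dyadicFloor
  fun_prop

lemma dyadicFloor_add (m : ℕ) (x y : ℝ) :
    dyadicFloor m (x + y) = dyadicFloor m x + dyadicFloor m y ∨
      dyadicFloor m (x + y) = dyadicFloor m x + dyadicFloor m y + (2 ^ m)⁻¹ := by
  have hsum : (x + y) * 2 ^ m = x * 2 ^ m + y * 2 ^ m := add_mul x y _
  have hlow := Int.le_floor_add (x * 2 ^ m) (y * 2 ^ m)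
  have hhigh := Int.le_floor_add_floor (x * 2 ^ m) (y * 2 ^ m)
  rw [← hsum] at hlow hhigh
  unfold dyadicFloor
  obtain h | h : ⌊(x + y) * 2 ^ m⌋ = ⌊x * 2 ^ m⌋ + ⌊y * 2 ^ m⌋ ∨
      ⌊(x + y) * 2 ^ m⌋ = ⌊x * 2 ^ m⌋ + ⌊y * 2 ^ m⌋ + 1 := by omega
  · left
    rw [h]
    push_cast
    ring
  · right
    rw [h]
    push_cast
    ring

lemma discretize_mconv (μ ν : Measure ℝ) (m : ℕ) :
    discretize (mconv μ ν) m = (μ.prod ν).map (fun p => dyadicFloor m (p.1 + p.2)) :=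
  Measure.map_map (measurable_dyadicFloor m) (by fun_prop)

lemma mconv_discretize (μ ν : Measure ℝ) [SFinite μ] [SFinite ν] (m : ℕ) :
    mconv (discretize μ m) (discretize ν m) =
      (μ.prod ν).map (fun p => dyadicFloor m p.1 + dyadicFloor m p.2) := by
  have hF := measurable_dyadicFloor m
  change Measure.map _ ((μ.map (dyadicFloor m)).prod (ν.map (dyadicFloor m))) = _
  rw [Measure.map_prod_map _ _ hF hF, Measure.map_map (by fun_prop) (hF.prodMap hF)]
  rfl

section AddGroup

variable {G : Type*} [AddGroup G]

lemma tsum_rpow_le_of_le_add_shift {a b : G → ℝ≥0∞} {q : ℝ} (hq : 1 ≤ q) (δ : G)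
    (h : ∀ x, a x ≤ b x + b (x - δ)) : ∑' x, a x ^ q ≤ 2 ^ q * ∑' x, b x ^ q := by
  have hshift : ∑' x, b (x - δ) ^ q = ∑' x, b x ^ q := (Equiv.subRight δ).tsum_eq (b · ^ q)
  calc ∑' x, a x ^ q
      ≤ ∑' x, 2 ^ (q - 1) * (b x ^ q + b (x - δ) ^ q) := ENNReal.tsum_le_tsum fun x =>
        (ENNReal.rpow_le_rpow (h x) (by linarith)).trans
          (ENNReal.rpow_add_le_mul_rpow_add_rpow _ _ hq)
    _ = 2 ^ (q - 1) * (∑' x, b x ^ q + ∑' x, b (x - δ) ^ q) := by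
        rw [ENNReal.tsum_mul_left, ENNReal.tsum_add]
    _ = 2 ^ q * ∑' x, b x ^ q := by
        rw [hshift, ← two_mul, ← mul_assoc]
        congr 1
        conv_rhs => rw [← sub_add_cancel q 1,
          ENNReal.rpow_add _ _ two_ne_zero ENNReal.ofNat_ne_top, ENNReal.rpow_one]

end AddGroup

lemma lqNormQ_eq_toReal_tsum (ρ : Measure ℝ) [IsFiniteMeasure ρ] {q : ℝ} (hq : 0 ≤ q) :
    lqNormQ ρ q = (∑' x, ρ {x} ^ q).toReal := by
  rw [ENNReal.tsum_toReal_eq fun x => ENNReal.rpow_ne_top_of_nonneg hq (measure_ne_top ρ _)]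
  simp only [lqNormQ, ENNReal.toReal_rpow]

section PushForward

variable {α : Type*} [MeasurableSpace α]

lemma map_singleton_le_add_shift (ρ : Measure α) {F G : α → ℝ} (hF : Measurable F)
    (hG : Measurable G) {δ : ℝ} (h : ∀ p, G p = F p ∨ G p = F p + δ) (x : ℝ) :
    ρ.map G {x} ≤ ρ.map F {x} + ρ.map F {x - δ} := by
  simp only [Measure.map_apply hF (measurableSet_singleton _),
    Measure.map_apply hG (measurableSet_singleton _)]
  refine (measure_mono fun p hp => ?_).trans (measure_union_le _ _)
  rcases h p with h | h
  · left
    simpa [← h] using hp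
  · right
    simp only [Set.mem_preimage, Set.mem_singleton_iff] at hp ⊢
    linarith

lemma tsum_measure_singleton_rpow_le_one (ρ : Measure α) [IsProbabilityMeasure ρ]
    [MeasurableSingletonClass α] {q : ℝ} (hq : 1 ≤ q) : ∑' x, ρ {x} ^ q ≤ 1 :=
  calc ∑' x, ρ {x} ^ q
      ≤ ∑' x, ρ {x} := ENNReal.tsum_le_tsum fun _ =>
        (ENNReal.rpow_le_rpow_of_exponent_ge prob_le_one hq).trans_eq (ENNReal.rpow_one _)
    _ ≤ ρ Set.univ := tsum_measure_le_measure_univ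
        (fun x => (measurableSet_singleton x).nullMeasurableSet)
        (fun _ _ hxy => (Set.disjoint_singleton.2 hxy).aedisjoint)
    _ = 1 := measure_univ

lemma lqNormQ_map_le (ρ : Measure α) [IsProbabilityMeasure ρ]
    {F G : α → ℝ} (hF : Measurable F) (hG : Measurable G) {δ : ℝ}
    (h : ∀ p, G p = F p ∨ G p = F p + δ) {q : ℝ} (hq : 1 ≤ q) :
    lqNormQ (ρ.map G) q ≤ 2 ^ q * lqNormQ (ρ.map F) q := by
  have := Measure.isProbabilityMeasure_map (μ := ρ) hF.aemeasurable
  have := Measure.isProbabilityMeasure_map (μ := ρ) hG.aemeasurable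
  have hbound := tsum_rpow_le_of_le_add_shift hq δ (map_singleton_le_add_shift ρ hF hG h)
  have hfin := (tsum_measure_singleton_rpow_le_one (ρ.map F) hq).trans_lt ENNReal.one_lt_top
  rw [lqNormQ_eq_toReal_tsum _ (by linarith), lqNormQ_eq_toReal_tsum _ (by linarith),
    ← ENNReal.toReal_ofNat, ENNReal.toReal_rpow, ← ENNReal.toReal_mul]
  exact ENNReal.toReal_mono (ENNReal.mul_ne_top
    (ENNReal.rpow_ne_top_of_nonneg (by linarith) ENNReal.ofNat_ne_top) hfin.ne) hbound

end PushForward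

/-- Lemma 2.2: for every q ∈ [1,∞) there is C_q ≥ 1 such that for all
Borel probability measures μ, ν supported on [0,1) and all m:
C_q⁻¹ ‖μ^(m) ∗ ν^(m)‖_q^q ≤ ‖(μ∗ν)^(m)‖_q^q ≤ C_q ‖μ^(m) ∗ ν^(m)‖_q^q. -/
theorem discret_convolution (q : ℝ) (hq : 1 ≤ q) :
    ∃ C : ℝ, 1 ≤ C ∧ ∀ μ ν : Measure ℝ,
      IsProbabilityMeasure μ → IsProbabilityMeasure ν →
      μ (Ico (0 : ℝ) 1)ᶜ = 0 → ν (Ico (0 : ℝ) 1)ᶜ = 0 →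
      ∀ m : ℕ,
        C⁻¹ * lqNormQ (mconv (discretize μ m) (discretize ν m)) q ≤
            lqNormQ (discretize (mconv μ ν) m) q ∧
        lqNormQ (discretize (mconv μ ν) m) q ≤
            C * lqNormQ (mconv (discretize μ m) (discretize ν m)) q := by
  refine ⟨2 ^ q, Real.one_le_rpow one_le_two (by linarith), ?_⟩
  intro μ ν _ _ _ _ m
  have hF : Measurable fun p : ℝ × ℝ => dyadicFloor m p.1 + dyadicFloor m p.2 := by
    have := measurable_dyadicFloor m
    fun_prop
  have hG : Measurable fun p : ℝ × ℝ => dyadicFloor m (p.1 + p.2) :=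
    (measurable_dyadicFloor m).comp (by fun_prop)
  have hsplit (p : ℝ × ℝ) := dyadicFloor_add m p.1 p.2
  rw [discretize_mconv, mconv_discretize, inv_mul_le_iff₀ (by positivity)]
  have hsplit_neg (p : ℝ × ℝ) := (hsplit p).imp Eq.symm fun h => eq_add_neg_of_add_eq h.symm
  exact ⟨lqNormQ_map_le _ hG hF hsplit_neg hq, lqNormQ_map_le _ hF hG hsplit hq⟩
end

section
/- If C ⊂ ℝ is compact and uniformly perfect with constant K > 1, then dim_L C > 1/(log₂(2K) + 1). -/
open MeasureTheory Filter Set Metric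

/-- A ⊆ ℝ is uniformly perfect with constant K: whenever x ∈ A, r > 0 and
A ⊄ B(x,Kr), then A ∩ (B(x,Kr) \ B(x,r)) ≠ ∅. -/
def UnifPerfSet (A : Set ℝ) (K : ℝ) : Prop :=
  ∀ x ∈ A, ∀ r > 0, ¬ A ⊆ ball x (K * r) → (A ∩ (ball x (K * r) \ ball x r)).Nonempty

/-- Covering property with exponent t and constant c: for every x ∈ F and
0 < r < R < diam F, at least c (R/r)^t balls of radius r are needed to cover F ∩ B(x,R). -/
def CoversAtLeast (F : Set ℝ) (t c : ℝ) : Prop :=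
  ∀ x ∈ F, ∀ r R : ℝ, 0 < r → r < R → R < Metric.diam F →
    ∀ S : Finset ℝ, F ∩ ball x R ⊆ ⋃ y ∈ S, ball y r → c * (R / r) ^ t ≤ (S.card : ℝ)

/-- The lower dimension dim_L F: the supremum of all t ≥ 0 admitting a constant c > 0
with the covering property `CoversAtLeast F t c`. -/
noncomputable def lowerDim (F : Set ℝ) : ENNReal :=
  ⨆ (t : ℝ) (_ : 0 ≤ t ∧ ∃ c > 0, CoversAtLeast F t c), ENNReal.ofReal t

/-- Tree construction: in a uniformly perfect set, every ball B(z,ρ) with 2ρ < diam C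
contains 2^n points of C that are pairwise 2ρ/(2K+1)^n-separated. -/
lemma unifPerf_tree (C : Set ℝ) (K : ℝ) (hK : 1 < K) (h : UnifPerfSet C K) :
    ∀ n : ℕ, ∀ z ∈ C, ∀ ρ : ℝ, 0 < ρ → 2 * ρ < Metric.diam C →
      ∃ T : Finset ℝ, ↑T ⊆ C ∧ T.card = 2 ^ n ∧
        (∀ p ∈ T, dist p z ≤ ρ - ρ / (2 * K + 1) ^ n) ∧
        (∀ p ∈ T, ∀ q ∈ T, p ≠ q → 2 * ρ / (2 * K + 1) ^ n ≤ dist p q) := by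
  intro n
  induction n with
  | zero =>
    intro z hz ρ hρ _
    refine ⟨{z}, by simpa, by simp, ?_, by simp⟩
    intro p hp
    simp only [Finset.mem_singleton] at hp
    simp [hp]
  | succ n ih =>
    intro z hz ρ hρ hD
    have hM1 : (1 : ℝ) < 2 * K + 1 := by linarith
    have hM0 : (0 : ℝ) < 2 * K + 1 := by linarith
    have hMn : (0 : ℝ) < (2 * K + 1) ^ n := pow_pos hM0 n
    have hMn1 : (0 : ℝ) < (2 * K + 1) ^ (n + 1) := pow_pos hM0 (n + 1)
    set r : ℝ := 2 * ρ / (2 * K + 1) with hr_def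
    have hr : 0 < r := by positivity
    have hKr : K * r < ρ := by
      rw [hr_def]
      have : K * (2 * ρ / (2 * K + 1)) = 2 * K * ρ / (2 * K + 1) := by ring
      rw [this, div_lt_iff₀ hM0]
      nlinarith
    have hnotsub : ¬ C ⊆ ball z (K * r) := by
      intro hsub
      have h1 : Metric.diam C ≤ Metric.diam (ball z (K * r)) :=
        Metric.diam_mono hsub isBounded_ball
      have h2 : Metric.diam (ball z (K * r)) ≤ 2 * (K * r) :=
        Metric.diam_ball (by positivity)
      linarith
    obtain ⟨y, hyC, hyball, hynot⟩ := h z hz r hr hnotsub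
    have hyz1 : dist y z < K * r := by simpa [mem_ball] using hyball
    have hyz2 : r ≤ dist y z := by
      by_contra hcon
      exact hynot (by simpa [mem_ball] using lt_of_not_ge hcon)
    have hρM : 0 < ρ / (2 * K + 1) := by positivity
    have hDM : 2 * (ρ / (2 * K + 1)) < Metric.diam C := by
      have : ρ / (2 * K + 1) < ρ := by
        rw [div_lt_iff₀ hM0]; nlinarith
      linarith
    obtain ⟨T₁, hT₁C, hT₁card, hT₁near, hT₁sep⟩ := ih z hz (ρ / (2 * K + 1)) hρM hDM
    obtain ⟨T₂, hT₂C, hT₂card, hT₂near, hT₂sep⟩ := ih y hyC (ρ / (2 * K + 1)) hρM hDM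
    have hkey : ρ / (2 * K + 1) / (2 * K + 1) ^ n = ρ / (2 * K + 1) ^ (n + 1) := by
      rw [div_div, ← pow_succ']
    have hkey2 : 2 * (ρ / (2 * K + 1)) / (2 * K + 1) ^ n = 2 * ρ / (2 * K + 1) ^ (n + 1) := by
      rw [← mul_div_assoc, div_div, ← pow_succ']
    have hsum : ρ / (2 * K + 1) + 2 * K * ρ / (2 * K + 1) = ρ := by
      field_simp
      ring
    -- cross separation
    have hcross : ∀ p ∈ T₁, ∀ q ∈ T₂, 2 * ρ / (2 * K + 1) ^ (n + 1) ≤ dist p q := by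
      intro p hp q hq
      have h1 := hT₁near p hp
      have h2 := hT₂near q hq
      rw [hkey] at h1 h2
      have htri : dist y z ≤ dist p z + dist p q + dist q y := by
        have := dist_triangle4 y q p z
        have h4 : dist y q = dist q y := dist_comm _ _
        have h5 : dist q p = dist p q := dist_comm _ _
        have h6 : dist p z ≥ 0 := dist_nonneg
        calc dist y z ≤ dist y q + dist q p + dist p z := dist_triangle4 y q p z
          _ = dist p z + dist p q + dist q y := by rw [h4, h5]; ring
      have hrA : r = 2 * (ρ / (2 * K + 1)) := by rw [hr_def]; ring
      have hgoal : 2 * ρ / (2 * K + 1) ^ (n + 1) = 2 * (ρ / (2 * K + 1) ^ (n + 1)) := by ring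
      rw [hgoal]
      linarith [hyz2, h1, h2, htri, hrA]
    have hdisj : Disjoint T₁ T₂ := by
      rw [Finset.disjoint_left]
      intro a ha₁ ha₂
      have h1 := hcross a ha₁ a ha₂
      simp only [dist_self] at h1
      have h2 : (0:ℝ) < 2 * ρ / (2*K+1)^(n+1) := by positivity
      linarith
    refine ⟨T₁ ∪ T₂, ?_, ?_, ?_, ?_⟩
    · intro a ha
      rcases Finset.mem_union.mp (by exact_mod_cast ha) with h' | h'
      · exact hT₁C h'
      · exact hT₂C h'
    · rw [Finset.card_union_of_disjoint hdisj, hT₁card, hT₂card]; ring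
    · intro p hp
      rcases Finset.mem_union.mp hp with h' | h'
      · have h1 := hT₁near p h'
        rw [hkey] at h1
        have : ρ / (2*K+1) ≤ ρ := by
          rw [div_le_iff₀ hM0]; nlinarith
        linarith
      · have h1 := hT₂near p h'
        rw [hkey] at h1
        have htri : dist p z ≤ dist p y + dist y z := dist_triangle p y z
        have hKr' : K * r = 2 * K * ρ / (2 * K + 1) := by rw [hr_def]; ring
        have hyzK : dist y z < 2 * K * ρ / (2*K+1) := by rw [← hKr']; exact hyz1
        linarith [hsum]
    · intro p hp q hq hpq
      rcases Finset.mem_union.mp hp with hp' | hp' <;>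
        rcases Finset.mem_union.mp hq with hq' | hq'
      · have := hT₁sep p hp' q hq' hpq
        rw [hkey2] at this; linarith
      · exact hcross p hp' q hq'
      · have := hcross q hq' p hp'
        rw [dist_comm] at this; exact this
      · have := hT₂sep p hp' q hq' hpq
        rw [hkey2] at this; linarith

lemma unifPerf_covers (C : Set ℝ) (K : ℝ) (hK : 1 < K) (h : UnifPerfSet C K) :
    CoversAtLeast C (Real.log 2 / Real.log (2 * K + 1)) (1/4) := by
  intro x hx r R hr hrR hRD S hcov
  set t : ℝ := Real.log 2 / Real.log (2 * K + 1) with ht_def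
  have hM0 : (0:ℝ) < 2 * K + 1 := by linarith
  have hM1 : (1:ℝ) < 2 * K + 1 := by linarith
  have hM2 : (2:ℝ) ≤ 2 * K + 1 := by linarith
  have hlogM : 0 < Real.log (2 * K + 1) := Real.log_pos hM1
  have hlog2 : 0 < Real.log 2 := Real.log_pos (by norm_num)
  have ht0 : 0 < t := div_pos hlog2 hlogM
  have ht1 : t ≤ 1 := by
    rw [ht_def, div_le_one hlogM]
    exact Real.log_le_log (by norm_num) hM2
  have hMt : (2 * K + 1) ^ t = (2:ℝ) := by
    rw [Real.rpow_def_of_pos hM0, ht_def, mul_comm, div_mul_cancel₀ _ (ne_of_gt hlogM)]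
    exact Real.exp_log (by norm_num)
  have hR0 : 0 < R := lt_trans hr hrR
  -- S is nonempty
  have hSne : S.Nonempty := by
    have hxm : x ∈ C ∩ ball x R := ⟨hx, mem_ball_self hR0⟩
    obtain ⟨y, hyS, -⟩ := mem_iUnion₂.mp (hcov hxm)
    exact ⟨y, hyS⟩
  have hS1 : (1:ℝ) ≤ (S.card : ℝ) := by
    exact_mod_cast Finset.card_pos.mpr hSne
  by_cases hcase : R ≤ 2 * r
  · -- small case: R/r ≤ 2
    have h1 : R / r ≤ 2 := by rw [div_le_iff₀ hr]; linarith
    have h2 : (R / r) ^ t ≤ (2:ℝ) ^ t :=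
      Real.rpow_le_rpow (by positivity) h1 ht0.le
    have h3 : (2:ℝ) ^ t ≤ (2:ℝ) ^ (1:ℝ) :=
      Real.rpow_le_rpow_of_exponent_le (by norm_num) ht1
    rw [Real.rpow_one] at h3
    nlinarith
  · push_neg at hcase
    set ρ : ℝ := R / 2 with hρ_def
    have hρ0 : 0 < ρ := by positivity
    have hρr : 1 < ρ / r := by
      rw [lt_div_iff₀ hr, hρ_def]; linarith
    have hρr0 : 0 < ρ / r := by linarith
    set n : ℕ := Nat.floor (Real.logb (2 * K + 1) (ρ / r)) with hn_def
    have hlb0 : 0 ≤ Real.logb (2 * K + 1) (ρ / r) := Real.logb_nonneg hM1 hρr.le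
    have hn_le : (n : ℝ) ≤ Real.logb (2 * K + 1) (ρ / r) := Nat.floor_le hlb0
    have hn_lt : Real.logb (2 * K + 1) (ρ / r) < n + 1 := Nat.lt_floor_add_one _
    have hMn_le : ((2 * K + 1):ℝ) ^ n ≤ ρ / r := by
      have h1 : ((2 * K + 1):ℝ) ^ ((n:ℝ)) ≤ (2 * K + 1) ^ Real.logb (2 * K + 1) (ρ / r) :=
        Real.rpow_le_rpow_of_exponent_le hM1.le hn_le
      rw [Real.rpow_logb hM0 hM1.ne' hρr0] at h1
      rwa [Real.rpow_natCast] at h1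
    have hMn_lt : ρ / r < ((2 * K + 1):ℝ) ^ (n + 1) := by
      have h1 : (2 * K + 1) ^ Real.logb (2 * K + 1) (ρ / r)
          < ((2 * K + 1):ℝ) ^ (((n:ℝ) + 1)) :=
        Real.rpow_lt_rpow_of_exponent_lt hM1 hn_lt
      rw [Real.rpow_logb hM0 hM1.ne' hρr0] at h1
      have : ((n:ℝ) + 1) = ((n + 1 : ℕ) : ℝ) := by push_cast; ring
      rwa [this, Real.rpow_natCast] at h1
    have h2ρ : 2 * ρ < Metric.diam C := by rw [hρ_def]; linarith
    obtain ⟨T, hTC, hTcard, hTnear, hTsep⟩ :=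
      unifPerf_tree C K hK h n x hx ρ hρ0 h2ρ
    have hrρ : r ≤ ρ / (2 * K + 1) ^ n := by
      rw [le_div_iff₀ (pow_pos hM0 n)]
      calc r * (2 * K + 1) ^ n ≤ r * (ρ / r) := by
            apply mul_le_mul_of_nonneg_left hMn_le hr.le
        _ = ρ := by field_simp
    -- selection function
    classical
    set g : ℝ → ℝ := fun p => if hp : ∃ y ∈ S, p ∈ ball y r then hp.choose else 0 with hg_def
    have hgood : ∀ p ∈ T, g p ∈ S ∧ p ∈ ball (g p) r := by
      intro p hp
      have hpC : p ∈ C := hTC hp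
      have hpball : p ∈ ball x R := by
        have h1 := hTnear p hp
        have h2 : 0 < ρ / (2 * K + 1) ^ n := by positivity
        rw [mem_ball]
        have : ρ < R := by rw [hρ_def]; linarith
        linarith
      have hex : ∃ y ∈ S, p ∈ ball y r := by
        obtain ⟨y, hyS, hpy⟩ := mem_iUnion₂.mp (hcov ⟨hpC, hpball⟩)
        exact ⟨y, hyS, hpy⟩
      rw [hg_def]
      simp only [dif_pos hex]
      exact hex.choose_spec
    have hinj : Set.InjOn g ↑T := by
      intro p hp q hq hgpq
      by_contra hpq
      have h1 := (hgood p hp).2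
      have h2 := (hgood q hq).2
      rw [hgpq] at h1
      have hd : dist p q < 2 * r := by
        calc dist p q ≤ dist p (g q) + dist (g q) q := dist_triangle _ _ _
          _ < r + r := by
              rw [mem_ball] at h1 h2
              rw [dist_comm (g q) q]
              exact add_lt_add h1 h2
          _ = 2 * r := by ring
      have hsep := hTsep p hp q hq hpq
      have : 2 * r ≤ 2 * ρ / (2 * K + 1) ^ n := by
        rw [mul_div_assoc]
        linarith
      linarith
    have hcard : T.card ≤ S.card := by
      apply Finset.card_le_card_of_injOn g (fun p hp => (hgood p hp).1) hinj
    have hcard' : (2:ℝ) ^ n ≤ (S.card : ℝ) := by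
      have : ((2:ℕ) ^ n : ℝ) ≤ (S.card : ℝ) := by
        exact_mod_cast hTcard ▸ hcard
      exact_mod_cast this
    -- numeric estimate
    have hRr : R / r = 2 * (ρ / r) := by rw [hρ_def]; ring
    have hsplit : (R / r) ^ t = (2:ℝ) ^ t * (ρ / r) ^ t := by
      rw [hRr, Real.mul_rpow (by norm_num) hρr0.le]
    have h2t : (2:ℝ) ^ t ≤ 2 := by
      have := Real.rpow_le_rpow_of_exponent_le (one_le_two (α := ℝ)) ht1
      rwa [Real.rpow_one] at this
    have hrpow : (ρ / r) ^ t ≤ (2:ℝ) ^ (n + 1) := by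
      have h1 : (ρ / r) ^ t ≤ (((2 * K + 1):ℝ) ^ (n + 1)) ^ t :=
        Real.rpow_le_rpow hρr0.le hMn_lt.le ht0.le
      have h2 : (((2 * K + 1):ℝ) ^ (n + 1)) ^ t = ((2 * K + 1) ^ t) ^ (n + 1) := by
        rw [← Real.rpow_natCast (2 * K + 1) (n + 1), ← Real.rpow_mul hM0.le,
          mul_comm (((n + 1 : ℕ)):ℝ) t, Real.rpow_mul hM0.le, Real.rpow_natCast]
      rw [h2, hMt] at h1
      exact h1
    have hfin : (R / r) ^ t ≤ 4 * (2:ℝ) ^ n := by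
      calc (R / r) ^ t = (2:ℝ) ^ t * (ρ / r) ^ t := hsplit
        _ ≤ 2 * (2:ℝ) ^ (n + 1) := by
            apply mul_le_mul h2t hrpow (by positivity) (by norm_num)
        _ = 4 * (2:ℝ) ^ n := by rw [pow_succ]; ring
    linarith

/-- Proposition 5.1(1): if C ⊆ ℝ is compact and uniformly perfect with
constant K > 1, then dim_L C > 1/(log₂(2K) + 1). -/
theorem unif_perf_to_lower_dim (C : Set ℝ) (hC : IsCompact C) (K : ℝ) (hK : 1 < K)
    (h : UnifPerfSet C K) :
    ENNReal.ofReal (1 / (Real.logb 2 (2 * K) + 1)) < lowerDim C := by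
  set t : ℝ := Real.log 2 / Real.log (2 * K + 1) with ht_def
  have hM1 : (1:ℝ) < 2 * K + 1 := by linarith
  have hlogM : 0 < Real.log (2 * K + 1) := Real.log_pos hM1
  have hlog2 : 0 < Real.log 2 := Real.log_pos (by norm_num)
  have ht0 : 0 < t := div_pos hlog2 hlogM
  have hle : ENNReal.ofReal t ≤ lowerDim C := by
    refine le_iSup₂ (f := fun (s : ℝ) (_ : 0 ≤ s ∧ ∃ c > 0, CoversAtLeast C s c) =>
      ENNReal.ofReal s) t ?_
    exact ⟨ht0.le, 1/4, by norm_num, unifPerf_covers C K hK h⟩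
  refine lt_of_lt_of_le ?_ hle
  rw [ENNReal.ofReal_lt_ofReal_iff ht0]
  have hA : 1 / (Real.logb 2 (2 * K) + 1) = Real.log 2 / Real.log (4 * K) := by
    have h4 : Real.log (4 * K) = Real.log 2 + Real.log (2 * K) := by
      rw [show (4:ℝ) * K = 2 * (2 * K) by ring,
        Real.log_mul (by norm_num) (by positivity)]
    rw [h4, Real.logb]
    rw [div_add' _ _ _ (ne_of_gt hlog2), one_div_div]
    ring_nf
  rw [hA, ht_def]
  apply div_lt_div_of_pos_left hlog2 hlogM
  exact Real.log_lt_log (by linarith) (by nlinarith)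
end

section
/- Let C ⊂ ℝ be compact, and suppose there are t > 0 and c_t > 0 such that for every x ∈ C and 0 < r < R < diam C, at least c_t (R/r)^t balls of radius r are needed to cover C ∩ B(x,R). Then C is uniformly perfect with constant K = (2/c_t)^{1/t}. -/
open MeasureTheory Filter Set Metric

/-- Proposition 5.1(2): if C ⊆ ℝ is compact and there are t > 0 and
c > 0 such that for every x ∈ C and 0 < r < R < diam C at least c (R/r)^t balls of radius
r are needed to cover C ∩ B(x,R), then C is uniformly perfect with constant
K = (2/c)^{1/t}. -/
theorem lower_dim_to_unif_perf (C : Set ℝ) (hC : IsCompact C) (t c : ℝ) (ht : 0 < t)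
    (hc : 0 < c) (h : CoversAtLeast C t c) :
    UnifPerfSet C ((2 / c) ^ (1 / t)) := by
  intro x hx r hr hns
  set K : ℝ := (2 / c) ^ (1 / t) with hK
  by_contra hempty
  rw [Set.not_nonempty_iff_eq_empty] at hempty
  -- the set C ∩ B(x, K r) is contained in B(x, r)
  have hsub : C ∩ ball x (K * r) ⊆ ball x r := by
    intro z hz
    by_contra hz'
    exact (Set.eq_empty_iff_forall_notMem.mp hempty z) ⟨hz.1, hz.2, hz'⟩
  have hKpos : 0 < K := Real.rpow_pos_of_pos (by positivity) _
  -- get a point of C outside B(x, K r), giving diam C ≥ K r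
  obtain ⟨y, hyC, hy⟩ := Set.not_subset.mp hns
  have hdiam : K * r ≤ Metric.diam C := by
    have h1 : K * r ≤ dist y x := by
      rw [mem_ball] at hy; exact le_of_not_gt hy
    exact h1.trans (Metric.dist_le_diam_of_mem hC.isBounded hyC hx)
  have hD : 0 < Metric.diam C := lt_of_lt_of_le (mul_pos hKpos hr) hdiam
  -- Step 1: c < 1, using the minimum point of C
  have hne : C.Nonempty := ⟨x, hx⟩
  have hm : sInf C ∈ C := hC.sInf_mem hne
  set m := sInf C
  have hc1 : c < 1 := by
    set D := Metric.diam C with hDdef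
    have hcover : C ∩ ball m (D / 2) ⊆
        ⋃ y ∈ ({m + D / 4} : Finset ℝ), ball y (3 / 4 * (D / 2)) := by
      intro z hz
      have hmz : m ≤ z := csInf_le hC.isBounded.bddBelow hz.1
      have hzd : dist z m < D / 2 := mem_ball.mp hz.2
      rw [Real.dist_eq] at hzd
      have hzlt : z - m < D / 2 := (le_abs_self _).trans_lt hzd
      simp only [Finset.mem_singleton, Set.iUnion_iUnion_eq_left, mem_ball, Real.dist_eq]
      rw [abs_lt]
      constructor <;> linarith
    have := h m hm (3 / 4 * (D / 2)) (D / 2) (by positivity) (by linarith) (by linarith)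
      ({m + D / 4} : Finset ℝ) hcover
    rw [Finset.card_singleton] at this
    have hratio : (D / 2) / (3 / 4 * (D / 2)) = 4 / 3 := by
      field_simp
    rw [hratio] at this
    have h43 : (1 : ℝ) < (4 / 3 : ℝ) ^ t := by
      rw [Real.one_lt_rpow_iff_of_pos (by norm_num)]
      left; exact ⟨by norm_num, ht⟩
    nlinarith [this]
  -- Step 2: apply the covering bound with one ball at radius R = (3/(2c))^(1/t) * r
  set q : ℝ := (3 / (2 * c)) ^ (1 / t) with hq
  have hq1 : 1 < q := by
    rw [hq, Real.one_lt_rpow_iff_of_pos (by positivity)]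
    left
    constructor
    · rw [lt_div_iff₀ (by positivity)]; linarith
    · positivity
  have hqK : q < K := by
    rw [hq, hK]
    apply Real.rpow_lt_rpow (by positivity)
    · rw [div_lt_div_iff₀ (by positivity) (by positivity)]; nlinarith
    · positivity
  set R : ℝ := q * r with hR
  have hRr : r < R := by
    rw [hR]; nlinarith
  have hRK : R < K * r := by
    rw [hR]; nlinarith
  have hRD : R < Metric.diam C := lt_of_lt_of_le hRK hdiam
  have hcover : C ∩ ball x R ⊆ ⋃ y ∈ ({x} : Finset ℝ), ball y r := by
    intro z hz
    simp only [Finset.mem_singleton, Set.iUnion_iUnion_eq_left]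
    exact hsub ⟨hz.1, mem_ball.mpr (lt_trans (mem_ball.mp hz.2) hRK)⟩
  have hmain := h x hx r R hr hRr hRD ({x} : Finset ℝ) hcover
  rw [Finset.card_singleton] at hmain
  have hRrq : R / r = q := by
    rw [hR]; field_simp
  rw [hRrq] at hmain
  have hqt : q ^ t = 3 / (2 * c) := by
    rw [hq, one_div, Real.rpow_inv_rpow (by positivity) (ne_of_gt ht)]
  rw [hqt] at hmain
  have : c * (3 / (2 * c)) = 3 / 2 := by field_simp
  rw [this] at hmain
  norm_num at hmain
end

section
/- If C ⊂ ℝ is compact and uniformly perfect with constant K > 1, then its thickness satisfies τ(C) ≥ 1/K. -/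
open MeasureTheory Filter Set Metric

/-- `HasGapIn C a b`: the compact set C has a (nonempty bounded) complementary gap
contained in the interval [a,b], i.e. a bounded connected component (u,v) of ℝ \ C
with a ≤ u < v ≤ b. -/
def HasGapIn (C : Set ℝ) (a b : ℝ) : Prop :=
  ∃ u v : ℝ, a ≤ u ∧ u < v ∧ v ≤ b ∧ u ∈ C ∧ v ∈ C ∧ Ioo u v ∩ C = ∅

/-- A derivation of a compact set C ⊆ ℝ: to each finite binary word w it assigns a bridge
[a w, b w] and a (possibly empty) gap (c w, d w), starting from the smallest closed
interval containing C. If the bridge contains a gap of C it splits along a chosen gap of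
C; otherwise it is divided into two halves. The children bridges are
[a w, c w] and [d w, b w]. -/
structure CantorDerivation (C : Set ℝ) where
  a : List Bool → ℝ
  b : List Bool → ℝ
  c : List Bool → ℝ
  d : List Bool → ℝ
  root_a : a [] = sInf C
  root_b : b [] = sSup C
  le_ac : ∀ w, a w ≤ c w
  le_cd : ∀ w, c w ≤ d w
  le_db : ∀ w, d w ≤ b w
  gap : ∀ w, c w < d w → c w ∈ C ∧ d w ∈ C ∧ Ioo (c w) (d w) ∩ C = ∅
  split : ∀ w, HasGapIn C (a w) (b w) → c w < d w
  nosplit : ∀ w, ¬ HasGapIn C (a w) (b w) → c w = d w ∧ c w = (a w + b w) / 2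
  child0_a : ∀ w, a (w ++ [false]) = a w
  child0_b : ∀ w, b (w ++ [false]) = c w
  child1_a : ∀ w, a (w ++ [true]) = d w
  child1_b : ∀ w, b (w ++ [true]) = b w

/-- The thickness τ_𝒟 of a derivation: the infimum over splitting bridges of
min(diam I_{w0}, diam I_{w1})/diam O_w (and ∞ if no bridge splits). -/
noncomputable def derThickness {C : Set ℝ} (D : CantorDerivation C) : ENNReal :=
  ⨅ (w : {w : List Bool // D.c w < D.d w}),
    ENNReal.ofReal (min (D.c w.1 - D.a w.1) (D.b w.1 - D.d w.1) / (D.d w.1 - D.c w.1))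

/-- The thickness τ(C) of a compact set C ⊆ ℝ: the supremum of τ_𝒟 over all
derivations 𝒟 of C. -/
noncomputable def thickness (C : Set ℝ) : ENNReal :=
  ⨆ D : CantorDerivation C, derThickness D

/-! Split every bridge along a longest gap of `C` inside it. Then every bridge is guarded: the
gaps adjacent to it are at least as long as every gap inside it, an invariant that survives
splitting. For a gap
`(u, v)` of length `g` inside a bridge `[a, b]`, uniform perfectness at `u` with radius `g / K`
yields a point of `C` at distance in `[g / K, g)` from `u`. It can lie neither in the gap nor
beyond the adjacent gap to the left of `a`, so it lies in `[a, u]` and `u - a ≥ g / K`.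
Symmetrically `b - v ≥ g / K`. -/

lemma UnifPerfSet.exists_mem_dist_mem_Ico {C : Set ℝ} {K : ℝ} (h : UnifPerfSet C K)
    (hK : 0 < K) {x y : ℝ} (hx : x ∈ C) (hy : y ∈ C) (hxy : x ≠ y) :
    ∃ z ∈ C, dist x y / K ≤ dist z x ∧ dist z x < dist x y := by
  have hr : 0 < dist x y / K := div_pos (dist_pos.2 hxy) hK
  have hKr : K * (dist x y / K) = dist x y := mul_div_cancel₀ _ hK.ne'
  have hy_out : ¬ C ⊆ ball x (K * (dist x y / K)) := fun hsub => by
    simpa [hKr, dist_comm] using hsub hy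
  obtain ⟨z, hz, hz_near, hz_far⟩ := h x hx _ hr hy_out
  rw [hKr, mem_ball] at hz_near
  exact ⟨z, hz, not_lt.1 hz_far, hz_near⟩

def IsGap (C : Set ℝ) (u v : ℝ) : Prop :=
  u < v ∧ u ∈ C ∧ v ∈ C ∧ Ioo u v ∩ C = ∅

lemma isClosed_setOf_Ioo_inter_eq_empty (C : Set ℝ) :
    IsClosed {p : ℝ × ℝ | Ioo p.1 p.2 ∩ C = ∅} := by
  have : {p : ℝ × ℝ | Ioo p.1 p.2 ∩ C = ∅} = ⋂ x ∈ C, {p | p.1 < x ∧ x < p.2}ᶜ := by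
    ext p
    simp only [mem_ofPred_eq, mem_iInter, mem_compl_iff, eq_empty_iff_forall_notMem,
      mem_inter_iff, mem_Ioo, not_and]
    exact ⟨fun h x hx h₁ h₂ => h x ⟨h₁, h₂⟩ hx, fun h x hx hxC => h x hxC hx.1 hx.2⟩
  rw [this]
  exact isClosed_biInter fun x _ =>
    ((isOpen_lt continuous_fst continuous_const).inter
      (isOpen_lt continuous_const continuous_snd)).isClosed_compl

def IsLongestGapIn (C : Set ℝ) (a b u v : ℝ) : Prop :=
  a ≤ u ∧ v ≤ b ∧ IsGap C u v ∧ ∀ u' v', a ≤ u' → v' ≤ b → IsGap C u' v' → v' - u' ≤ v - u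

lemma exists_isLongestGapIn {C : Set ℝ} (hC : IsCompact C) {a b : ℝ} (h : HasGapIn C a b) :
    ∃ p : ℝ × ℝ, IsLongestGapIn C a b p.1 p.2 := by
  obtain ⟨u, v, hau, huv, hvb, hu, hv, hgap⟩ := h
  set T := C ∩ Icc a b
  set S := T ×ˢ T ∩ {p : ℝ × ℝ | Ioo p.1 p.2 ∩ C = ∅}
  have hS : IsCompact S := by
    have hT : IsCompact T := hC.inter_right isClosed_Icc
    exact (hT.prod hT).inter_right (isClosed_setOf_Ioo_inter_eq_empty C)
  have huvS : (u, v) ∈ S := ⟨⟨⟨hu, hau, huv.le.trans hvb⟩, ⟨hv, hau.trans huv.le, hvb⟩⟩, hgap⟩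
  obtain ⟨p, ⟨⟨⟨hp₁, hap₁, -⟩, ⟨hp₂, -, hp₂b⟩⟩, hpgap⟩, hmax⟩ :=
    hS.exists_isMaxOn ⟨_, huvS⟩ (continuous_snd.sub continuous_fst).continuousOn
  have hlongest : ∀ u' v', a ≤ u' → v' ≤ b → IsGap C u' v' → v' - u' ≤ p.2 - p.1 :=
    fun u' v' hau' hv'b ⟨hu'v', hu', hv', hgap'⟩ => isMaxOn_iff.1 hmax (u', v')
      ⟨⟨⟨hu', hau', hu'v'.le.trans hv'b⟩, ⟨hv', hau'.trans hu'v'.le, hv'b⟩⟩, hgap'⟩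
  have hp : p.1 < p.2 := by linarith [hlongest u v hau hvb ⟨huv, hu, hv, hgap⟩]
  exact ⟨p, hap₁, hp₂b, ⟨hp, hp₁, hp₂, hpgap⟩, hlongest⟩

lemma Icc_subset_of_not_hasGapIn {C : Set ℝ} (hC : IsCompact C) {a b : ℝ} (ha : a ∈ C)
    (hb : b ∈ C) (h : ¬ HasGapIn C a b) : Icc a b ⊆ C := by
  intro x hx
  by_contra hxC
  have hL : IsCompact (C ∩ Icc a x) := hC.inter_right isClosed_Icc
  have hR : IsCompact (C ∩ Icc x b) := hC.inter_right isClosed_Icc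
  have hu := hL.sSup_mem ⟨a, ha, le_rfl, hx.1⟩
  have hv := hR.sInf_mem ⟨b, hb, hx.2, le_rfl⟩
  have hux : sSup (C ∩ Icc a x) < x := hu.2.2.lt_of_ne fun e => hxC (e ▸ hu.1)
  have hxv : x < sInf (C ∩ Icc x b) := hv.2.1.lt_of_ne' fun e => hxC (e ▸ hv.1)
  refine h ⟨_, _, hu.2.1, hux.trans hxv, hv.2.2, hu.1, hv.1, eq_empty_of_forall_notMem ?_⟩
  rintro y ⟨⟨huy, hyv⟩, hy⟩
  rcases le_total y x with hyx | hxy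
  · exact huy.not_ge (le_csSup hL.bddAbove ⟨hy, hu.2.1.trans huy.le, hyx⟩)
  · exact hyv.not_ge (csInf_le hR.bddBelow ⟨hy, hxy, hyv.le.trans hv.2.2⟩)

structure IsGuardedBridge (C : Set ℝ) (a b : ℝ) : Prop where
  left_mem : a ∈ C
  right_mem : b ∈ C
  le : a ≤ b
  left_clear : ∀ u v, a ≤ u → v ≤ b → IsGap C u v → Ioo (a - (v - u)) a ∩ C = ∅
  right_clear : ∀ u v, a ≤ u → v ≤ b → IsGap C u v → Ioo b (b + (v - u)) ∩ C = ∅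

namespace IsGuardedBridge

variable {C : Set ℝ} {a b u v : ℝ}

lemma sInf_sSup (hC : IsCompact C) (hne : C.Nonempty) : IsGuardedBridge C (sInf C) (sSup C) where
  left_mem := hC.sInf_mem hne
  right_mem := hC.sSup_mem hne
  le := csInf_le_csSup hne hC.bddBelow hC.bddAbove
  left_clear _ _ _ _ _ := eq_empty_of_forall_notMem fun _ ⟨⟨_, hy⟩, hyC⟩ =>
    hy.not_ge (csInf_le hC.bddBelow hyC)
  right_clear _ _ _ _ _ := eq_empty_of_forall_notMem fun _ ⟨⟨hy, _⟩, hyC⟩ =>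
    hy.not_ge (le_csSup hC.bddAbove hyC)

lemma of_Icc_subset (ha : a ∈ C) (hb : b ∈ C) (hab : a ≤ b) (hsub : Icc a b ⊆ C) :
    IsGuardedBridge C a b := by
  have hno_gap : ∀ u v, a ≤ u → v ≤ b → ¬ IsGap C u v := fun u v hau hvb ⟨huv, _, _, hgap⟩ =>
    hgap.subset ⟨⟨left_lt_add_div_two.2 huv, add_div_two_lt_right.2 huv⟩,
      hsub ⟨by linarith, by linarith⟩⟩
  exact ⟨ha, hb, hab, fun u v hau hvb hg => (hno_gap u v hau hvb hg).elim,
    fun u v hau hvb hg => (hno_gap u v hau hvb hg).elim⟩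

lemma left_of_isLongestGapIn (hab : IsGuardedBridge C a b) (hm : IsLongestGapIn C a b u v) :
    IsGuardedBridge C a u := by
  obtain ⟨hau, hvb, ⟨huv, hu, -, hgap⟩, hlongest⟩ := hm
  refine ⟨hab.left_mem, hu, hau, fun u' v' hau' hv'u hg' =>
    hab.left_clear u' v' hau' (hv'u.trans (huv.le.trans hvb)) hg', fun u' v' hau' hv'u hg' => ?_⟩
  have := hlongest u' v' hau' (hv'u.trans (huv.le.trans hvb)) hg'
  exact subset_eq_empty (inter_subset_inter_left C (Ioo_subset_Ioo_right (by linarith))) hgap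

lemma right_of_isLongestGapIn (hab : IsGuardedBridge C a b) (hm : IsLongestGapIn C a b u v) :
    IsGuardedBridge C v b := by
  obtain ⟨hau, hvb, ⟨huv, -, hv, hgap⟩, hlongest⟩ := hm
  refine ⟨hv, hab.right_mem, hvb, fun u' v' hvu' hv'b hg' => ?_, fun u' v' hvu' hv'b hg' =>
    hab.right_clear u' v' (hau.trans (huv.le.trans hvu')) hv'b hg'⟩
  have := hlongest u' v' (hau.trans (huv.le.trans hvu')) hv'b hg'
  exact subset_eq_empty (inter_subset_inter_left C (Ioo_subset_Ioo_left (by linarith))) hgap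

lemma div_le_sub_left {K : ℝ} (hC : UnifPerfSet C K) (hK : 0 < K) (hab : IsGuardedBridge C a b)
    (hau : a ≤ u) (hvb : v ≤ b) (hg : IsGap C u v) : (v - u) / K ≤ u - a := by
  obtain ⟨huv, hu, hv, hgap⟩ := hg
  obtain ⟨z, hz, hz_far, hz_near⟩ := hC.exists_mem_dist_mem_Ico hK hu hv huv.ne
  have hd : dist u v = v - u := by rw [dist_comm, Real.dist_eq, abs_of_pos (sub_pos.2 huv)]
  rw [hd, Real.dist_eq] at hz_far hz_near
  obtain ⟨hz_lo, hz_hi⟩ := abs_lt.1 hz_near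
  have hzu : z ≤ u := not_lt.1 fun h => hgap.subset ⟨⟨h, by linarith⟩, hz⟩
  have haz : a ≤ z := not_lt.1 fun h =>
    (hab.left_clear u v hau hvb ⟨huv, hu, hv, hgap⟩).subset ⟨⟨by linarith, h⟩, hz⟩
  rw [abs_of_nonpos (sub_nonpos.2 hzu)] at hz_far
  linarith

lemma div_le_sub_right {K : ℝ} (hC : UnifPerfSet C K) (hK : 0 < K) (hab : IsGuardedBridge C a b)
    (hau : a ≤ u) (hvb : v ≤ b) (hg : IsGap C u v) : (v - u) / K ≤ b - v := by
  obtain ⟨huv, hu, hv, hgap⟩ := hg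
  obtain ⟨z, hz, hz_far, hz_near⟩ := hC.exists_mem_dist_mem_Ico hK hv hu huv.ne'
  have hd : dist v u = v - u := by rw [Real.dist_eq, abs_of_pos (sub_pos.2 huv)]
  rw [hd, Real.dist_eq] at hz_far hz_near
  obtain ⟨hz_lo, hz_hi⟩ := abs_lt.1 hz_near
  have hvz : v ≤ z := not_lt.1 fun h => hgap.subset ⟨⟨by linarith, h⟩, hz⟩
  have hzb : z ≤ b := not_lt.1 fun h =>
    (hab.right_clear u v hau hvb ⟨huv, hu, hv, hgap⟩).subset ⟨⟨h, by linarith⟩, hz⟩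
  rw [abs_of_nonneg (sub_nonneg.2 hvz)] at hz_far
  linarith

end IsGuardedBridge

open Classical in
noncomputable def splitGap (C : Set ℝ) (a b : ℝ) : ℝ × ℝ :=
  if h : ∃ p : ℝ × ℝ, IsLongestGapIn C a b p.1 p.2 then h.choose else ((a + b) / 2, (a + b) / 2)

lemma splitGap_spec {C : Set ℝ} (hC : IsCompact C) (a b : ℝ) :
    IsLongestGapIn C a b (splitGap C a b).1 (splitGap C a b).2 ∨
      ¬ HasGapIn C a b ∧ splitGap C a b = ((a + b) / 2, (a + b) / 2) := by
  unfold splitGap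
  split_ifs with h
  · exact .inl h.choose_spec
  · exact .inr ⟨fun hg => h (exists_isLongestGapIn hC hg), rfl⟩

lemma splitGap_mem_Icc {C : Set ℝ} (hC : IsCompact C) {a b : ℝ} (hab : a ≤ b) :
    a ≤ (splitGap C a b).1 ∧ (splitGap C a b).1 ≤ (splitGap C a b).2 ∧ (splitGap C a b).2 ≤ b := by
  rcases splitGap_spec hC a b with ⟨hau, hvb, ⟨huv, -⟩, -⟩ | ⟨-, he⟩
  · exact ⟨hau, huv.le, hvb⟩
  · rw [he]
    exact ⟨by linarith, le_rfl, by linarith⟩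

lemma IsGuardedBridge.splitGap {C : Set ℝ} (hC : IsCompact C) {a b : ℝ}
    (hab : IsGuardedBridge C a b) :
    IsGuardedBridge C a (splitGap C a b).1 ∧ IsGuardedBridge C (splitGap C a b).2 b := by
  rcases splitGap_spec hC a b with hm | ⟨hno_gap, he⟩
  · exact ⟨hab.left_of_isLongestGapIn hm, hab.right_of_isLongestGapIn hm⟩
  · have hsub := Icc_subset_of_not_hasGapIn hC hab.left_mem hab.right_mem hno_gap
    have hmid : (a + b) / 2 ∈ Icc a b := ⟨by linarith [hab.le], by linarith [hab.le]⟩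
    rw [he]
    exact ⟨.of_Icc_subset hab.left_mem (hsub hmid) hmid.1 ((Icc_subset_Icc_right hmid.2).trans hsub),
      .of_Icc_subset (hsub hmid) hab.right_mem hmid.2 ((Icc_subset_Icc_left hmid.1).trans hsub)⟩

/-- Indexed by the reversed word: the children `w ++ [i]` of a derivation become `i :: w.reverse`
here, so that the recursion is structural. -/
noncomputable def greedyBridge (C : Set ℝ) : List Bool → ℝ × ℝ
  | [] => (sInf C, sSup C)
  | false :: w => ((greedyBridge C w).1, (splitGap C (greedyBridge C w).1 (greedyBridge C w).2).1)
  | true :: w => ((splitGap C (greedyBridge C w).1 (greedyBridge C w).2).2, (greedyBridge C w).2)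

lemma greedyBridge_le {C : Set ℝ} (hC : IsCompact C) (w : List Bool) :
    (greedyBridge C w).1 ≤ (greedyBridge C w).2 := by
  induction w with
  | nil =>
    rcases C.eq_empty_or_nonempty with rfl | hne
    · simp [greedyBridge]
    · exact csInf_le_csSup hne hC.bddBelow hC.bddAbove
  | cons i w ih =>
    obtain ⟨h₁, -, h₃⟩ := splitGap_mem_Icc hC (C := C) ih
    cases i
    · exact h₁
    · exact h₃

lemma isGuardedBridge_greedyBridge {C : Set ℝ} (hC : IsCompact C) (hne : C.Nonempty)
    (w : List Bool) : IsGuardedBridge C (greedyBridge C w).1 (greedyBridge C w).2 := by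
  induction w with
  | nil => exact .sInf_sSup hC hne
  | cons i w ih =>
    cases i
    · exact (ih.splitGap hC).1
    · exact (ih.splitGap hC).2

noncomputable def CantorDerivation.greedy {C : Set ℝ} (hC : IsCompact C) : CantorDerivation C where
  a w := (greedyBridge C w.reverse).1
  b w := (greedyBridge C w.reverse).2
  c w := (splitGap C (greedyBridge C w.reverse).1 (greedyBridge C w.reverse).2).1
  d w := (splitGap C (greedyBridge C w.reverse).1 (greedyBridge C w.reverse).2).2
  root_a := rfl
  root_b := rfl
  le_ac w := (splitGap_mem_Icc hC (greedyBridge_le hC w.reverse)).1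
  le_cd w := (splitGap_mem_Icc hC (greedyBridge_le hC w.reverse)).2.1
  le_db w := (splitGap_mem_Icc hC (greedyBridge_le hC w.reverse)).2.2
  gap w hlt := by
    rcases splitGap_spec hC (greedyBridge C w.reverse).1 (greedyBridge C w.reverse).2 with
      ⟨-, -, ⟨-, hu, hv, hgap⟩, -⟩ | ⟨-, he⟩
    · exact ⟨hu, hv, hgap⟩
    · simp [he] at hlt
  split w hg := by
    rcases splitGap_spec hC (greedyBridge C w.reverse).1 (greedyBridge C w.reverse).2 with
      ⟨-, -, ⟨huv, -⟩, -⟩ | ⟨hno_gap, -⟩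
    · exact huv
    · exact absurd hg hno_gap
  nosplit w hno_gap := by
    rcases splitGap_spec hC (greedyBridge C w.reverse).1 (greedyBridge C w.reverse).2 with
      ⟨hau, hvb, ⟨huv, hu, hv, hgap⟩, -⟩ | ⟨-, he⟩
    · exact absurd ⟨_, _, hau, huv, hvb, hu, hv, hgap⟩ hno_gap
    · simp only [he, and_self]
  child0_a w := by simp [greedyBridge]
  child0_b w := by simp [greedyBridge]
  child1_a w := by simp [greedyBridge]
  child1_b w := by simp [greedyBridge]

lemma ofReal_le_derThickness {C : Set ℝ} (D : CantorDerivation C) {t : ℝ}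
    (ht : ∀ w, D.c w < D.d w → t * (D.d w - D.c w) ≤ min (D.c w - D.a w) (D.b w - D.d w)) :
    ENNReal.ofReal t ≤ derThickness D :=
  le_iInf fun ⟨w, hw⟩ => ENNReal.ofReal_le_ofReal ((le_div_iff₀ (sub_pos.2 hw)).2 (ht w hw))

/-- Proposition 5.1(3): if C ⊆ ℝ is compact and uniformly perfect with
constant K > 1, then τ(C) ≥ 1/K. -/
theorem unif_perf_to_thickness (C : Set ℝ) (hC : IsCompact C) (K : ℝ) (hK : 1 < K)
    (h : UnifPerfSet C K) :
    ENNReal.ofReal (1 / K) ≤ thickness C := by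
  have hK₀ : 0 < K := zero_lt_one.trans hK
  let D := CantorDerivation.greedy hC
  refine le_iSup_of_le D (ofReal_le_derThickness D fun w hw => ?_)
  obtain ⟨hc, hd, hgap⟩ := D.gap w hw
  have hguard : IsGuardedBridge C (D.a w) (D.b w) :=
    isGuardedBridge_greedyBridge hC ⟨_, hc⟩ w.reverse
  have hg : IsGap C (D.c w) (D.d w) := ⟨hw, hc, hd, hgap⟩
  rw [one_div_mul_eq_div]
  exact le_min (hguard.div_le_sub_left h hK₀ (D.le_ac w) (D.le_db w) hg)
    (hguard.div_le_sub_right h hK₀ (D.le_ac w) (D.le_db w) hg)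
end
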